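/- arXiv:2512.24248 — 5 statements merged into one kernel-verified Lean document; each statement's English description precedes it below -/
import Mathlib

section
/- Every 4×4 real matrix B = [[0,1,0,0],[a,0,1,0],[0,b,0,-1],[0,0,c,0]] with a,b,c > 0 has exactly two real eigenvalues (one positive, one negative) and two nonreal eigenvalues. -/
/-!
The characteristic polynomial is the biquadratic `X⁴ + (c - a - b) X² - ac`. As a quadratic in
`X²` its constant term `-ac` is negative, so it has one positive root `r²` and one negative root
`-s`; hence it factors as `(X - r)(X + r)(X² + s)`, whose real roots are `±r` and whose remaining
complex roots `±i√s` are nonreal.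
-/

open Polynomial Matrix

theorem charpoly_eq_biquadratic {R : Type*} [CommRing R] (a b c : R) :
    (!![0, 1, 0, 0; a, 0, 1, 0; 0, b, 0, -1; 0, 0, c, 0] : Matrix (Fin 4) (Fin 4) R).charpoly =
      X ^ 4 + C (c - a - b) * X ^ 2 - C (a * c) := by
  simp [Matrix.charpoly, Matrix.det_succ_row_zero, Fin.sum_univ_succ, Matrix.charmatrix_apply,
    Matrix.diagonal_apply, Fin.succAbove]
  ring

theorem X_pow_four_add_C_mul_X_sq_sub_C {R : Type*} [CommRing R] (r s : R) :
    (X ^ 4 + C (s - r ^ 2) * X ^ 2 - C (r ^ 2 * s) : R[X]) =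
      (X - C r) * (X + C r) * (X ^ 2 + C s) := by
  simp only [map_sub, map_mul, map_pow]
  ring

theorem exists_pos_sub_sq_eq_and_sq_mul_eq (q m : ℝ) (hm : 0 < m) :
    ∃ r s : ℝ, 0 < r ∧ 0 < s ∧ s - r ^ 2 = q ∧ r ^ 2 * s = m := by
  set d := √(q ^ 2 + 4 * m)
  have hd : d ^ 2 = q ^ 2 + 4 * m := Real.sq_sqrt (by positivity)
  have hqd : |q| < d := by
    rw [← Real.sqrt_sq_eq_abs]; exact Real.sqrt_lt_sqrt (sq_nonneg q) (by linarith)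
  have hu : 0 < (d - q) / 2 := by linarith [le_abs_self q]
  refine ⟨√((d - q) / 2), (d + q) / 2, Real.sqrt_pos.mpr hu, by linarith [neg_abs_le q], ?_⟩
  rw [Real.sq_sqrt hu.le]
  constructor
  · ring
  · linear_combination hd / 4

theorem roots_X_sub_C_mul_X_add_C_mul_X_sq_add_C (r s : ℝ) (hs : 0 < s) :
    ((X - C r) * (X + C r) * (X ^ 2 + C s)).roots = {r, -r} := by
  have hquad : (X ^ 2 + C s).roots = 0 := by
    refine Multiset.eq_zero_of_forall_notMem fun x hx => ?_
    have := (mem_roots'.mp hx).2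
    simp only [IsRoot, eval_add, eval_pow, eval_X, eval_C] at this
    nlinarith
  have hpair : (X - C r) * (X + C r) = (({r, -r} : Multiset ℝ).map (fun x => X - C x)).prod := by
    simp
  have hmonic : ((X - C r) * (X + C r) * (X ^ 2 + C s)).Monic :=
    ((monic_X_sub_C r).mul (monic_X_add_C r)).mul (monic_X_pow_add_C s two_ne_zero)
  rw [roots_mul hmonic.ne_zero, hquad, hpair, roots_multiset_prod_X_sub_C, add_zero]

theorem map_ofReal_X_sub_C_mul_X_add_C_mul_X_sq_add_C (r s : ℝ) (hs : 0 ≤ s) :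
    ((X - C r) * (X + C r) * (X ^ 2 + C s)).map Complex.ofRealHom =
      (({(r : ℂ), -(r : ℂ), √s * Complex.I, -(√s * Complex.I)} : Multiset ℂ).map
        (fun z => X - C z)).prod := by
  have hsq : (C (s : ℂ) : ℂ[X]) = -C (√s * Complex.I) ^ 2 := by
    rw [← C_pow, ← C_neg, mul_pow, Complex.I_sq, ← Complex.ofReal_pow, Real.sq_sqrt hs]
    ring_nf
  simp only [Polynomial.map_mul, Polynomial.map_add, Polynomial.map_sub, Polynomial.map_pow,
    map_X, map_C, Complex.ofRealHom_eq_coe, Multiset.insert_eq_cons, Multiset.map_cons,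
    Multiset.prod_cons, Multiset.map_singleton, Multiset.prod_singleton, hsq, map_neg]
  ring

theorem stmt_7_general (a b c : ℝ) (ha : 0 < a) (hc : 0 < c) :
    let B : Matrix (Fin 4) (Fin 4) ℝ :=
      !![(0:ℝ), 1, 0, 0; a, 0, 1, 0; 0, b, 0, -1; 0, 0, c, 0]
    (∃! x : ℝ, 0 < x ∧ B.charpoly.IsRoot x) ∧
    (∃! x : ℝ, x < 0 ∧ B.charpoly.IsRoot x) ∧
    Multiset.card B.charpoly.roots = 2 ∧
    Multiset.card ((B.map Complex.ofReal).charpoly.roots.filter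
      (fun z => z.im ≠ 0)) = 2 := by
  intro B
  obtain ⟨r, s, hr, hs, hq, hm⟩ :=
    exists_pos_sub_sq_eq_and_sq_mul_eq (c - a - b) (a * c) (mul_pos ha hc)
  have hB : B.charpoly = (X - C r) * (X + C r) * (X ^ 2 + C s) := by
    rw [charpoly_eq_biquadratic, ← hq, ← hm, X_pow_four_add_C_mul_X_sq_sub_C]
  have hroots : B.charpoly.roots = {r, -r} := by
    rw [hB, roots_X_sub_C_mul_X_add_C_mul_X_sq_add_C r s hs]
  have hroot_iff (x : ℝ) : B.charpoly.IsRoot x ↔ x = r ∨ x = -r := by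
    rw [← mem_roots B.charpoly_monic.ne_zero, hroots]
    simp
  have hcroots : (B.map Complex.ofReal).charpoly.roots =
      {(r : ℂ), -(r : ℂ), √s * Complex.I, -(√s * Complex.I)} := by
    rw [show B.map Complex.ofReal = B.map Complex.ofRealHom from rfl, charpoly_map, hB,
      map_ofReal_X_sub_C_mul_X_add_C_mul_X_sq_add_C r s hs.le, roots_multiset_prod_X_sub_C]
  refine ⟨⟨r, ⟨hr, (hroot_iff r).2 (.inl rfl)⟩, ?_⟩,
    ⟨-r, ⟨neg_lt_zero.2 hr, (hroot_iff _).2 (.inr rfl)⟩, ?_⟩,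
    by simp [hroots], ?_⟩
  · rintro x ⟨hx, hxr⟩
    rcases (hroot_iff x).1 hxr with rfl | rfl <;> linarith
  · rintro x ⟨hx, hxr⟩
    rcases (hroot_iff x).1 hxr with rfl | rfl <;> linarith
  · have : 0 < √s := Real.sqrt_pos.2 hs
    simp [hcroots, Multiset.filter_singleton, this.ne']

/-- Every 4×4 real matrix `B = [[0,1,0,0],[a,0,1,0],[0,b,0,-1],[0,0,c,0]]`
with `a,b,c > 0` has exactly two real eigenvalues (one positive, one negative)
and two nonreal eigenvalues. -/
theorem stmt_7 (a b c : ℝ) (ha : 0 < a) (hb : 0 < b) (hc : 0 < c) :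
    let B : Matrix (Fin 4) (Fin 4) ℝ :=
      !![(0:ℝ), 1, 0, 0; a, 0, 1, 0; 0, b, 0, -1; 0, 0, c, 0]
    (∃! x : ℝ, 0 < x ∧ B.charpoly.IsRoot x) ∧
    (∃! x : ℝ, x < 0 ∧ B.charpoly.IsRoot x) ∧
    Multiset.card B.charpoly.roots = 2 ∧
    Multiset.card ((B.map Complex.ofReal).charpoly.roots.filter
      (fun z => z.im ≠ 0)) = 2 :=
  stmt_7_general a b c ha hc
end

section
/- Every 5×5 real matrix B = [[0,1,0,0,0],[a,0,1,0,0],[0,b,0,-1,0],[0,0,c,0,-1],[0,0,0,d,0]] with a,b,c,d > 0 has characteristic polynomial x·(x^4 - (a+b-c-d)x^2 - (ac+ad+bd)), and hence has exactly three real eigenvalues (0, one positive, one negative) and two nonreal eigenvalues. -/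
/-!
With `y = x²` the quartic factor is the quadratic `y² - p y - q`, `p = a + b - c - d`, and
`q = ac + ad + bd > 0`, so it has one positive root `t` and one negative root `-s`. Hence the
characteristic polynomial is `x (x - √t) (x + √t) (x² + s)`: its real roots are `0, ±√t`, and
over `ℂ` the remaining two are `±i√s`.
-/

open Polynomial Matrix

lemma charpoly_tridiag_five (a b c d : ℝ) :
    (!![(0:ℝ), 1, 0, 0, 0; a, 0, 1, 0, 0; 0, b, 0, -1, 0;
        0, 0, c, 0, -1; 0, 0, 0, d, 0]).charpoly =
      X * (X ^ 4 - C (a + b - c - d) * X ^ 2 - C (a * c + a * d + b * d)) := by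
  have hcharmatrix : charmatrix !![(0:ℝ), 1, 0, 0, 0; a, 0, 1, 0, 0; 0, b, 0, -1, 0;
        0, 0, c, 0, -1; 0, 0, 0, d, 0] =
      !![X, -1, 0, 0, 0; -C a, X, -1, 0, 0; 0, -C b, X, 1, 0;
         0, 0, -C c, X, 1; 0, 0, 0, -C d, X] := by
    ext i j
    fin_cases i <;> fin_cases j <;> simp
  rw [Matrix.charpoly, hcharmatrix, det_succ_row_zero]
  simp [Fin.sum_univ_succ, det_succ_row_zero, Fin.succAbove]
  ring

lemma exists_quartic_factor {p q : ℝ} (hq : 0 < q) :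
    ∃ r s : ℝ, 0 < r ∧ 0 < s ∧
      X ^ 4 - C p * X ^ 2 - C q = (X - C r) * (X + C r) * (X ^ 2 + C s) := by
  set D := √(p ^ 2 + 4 * q)
  have hD : D ^ 2 = p ^ 2 + 4 * q := Real.sq_sqrt (by positivity)
  have hDp : |p| < D := by
    apply abs_lt_of_sq_lt_sq _ (Real.sqrt_nonneg _)
    nlinarith
  -- `t` and `-s` are the roots of `y² - p y - q`.
  obtain ⟨t, s, ht, hs, hsub, hmul⟩ : ∃ t s : ℝ, 0 < t ∧ 0 < s ∧ t - s = p ∧ t * s = q :=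
    ⟨(D + p) / 2, (D - p) / 2, by linarith [neg_abs_le p], by linarith [le_abs_self p],
      by ring, by linear_combination hD / 4⟩
  refine ⟨√t, s, Real.sqrt_pos.mpr ht, hs, ?_⟩
  have hr : C √t ^ 2 = C t := by rw [← C_pow, Real.sq_sqrt ht.le]
  have hsub' : C t - C s = C p := by rw [← C_sub, hsub]
  have hmul' : C t * C s = C q := by rw [← C_mul, hmul]
  linear_combination (X ^ 2 + C s) * hr + X ^ 2 * hsub' + hmul'

lemma roots_X_mul_quartic {r s : ℝ} (hs : 0 < s) :
    (X * ((X - C r) * (X + C r) * (X ^ 2 + C s))).roots = {0, r, -r} := by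
  have hquad : (X ^ 2 + C s).roots = 0 := by
    refine Multiset.eq_zero_of_forall_notMem fun x hx => ?_
    have : x ^ 2 + s = 0 := by simpa using (mem_roots'.mp hx).2
    nlinarith [sq_nonneg x]
  have hprod : X * ((X - C r) * (X + C r) * (X ^ 2 + C s)) =
      (({0, r, -r} : Multiset ℝ).map fun z => X - C z).prod * (X ^ 2 + C s) := by
    simp only [Multiset.insert_eq_cons, Multiset.map_cons, Multiset.map_singleton,
      Multiset.prod_cons, Multiset.prod_singleton, C_0, C_neg, sub_zero, sub_neg_eq_add]
    ring
  have hne : X ^ 2 + C s ≠ 0 := (monic_X_pow_add_C s two_ne_zero).ne_zero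
  rw [hprod, roots_mul (mul_ne_zero (monic_multiset_prod_of_monic _ _
    fun z _ => monic_X_sub_C z).ne_zero hne), roots_multiset_prod_X_sub_C, hquad, add_zero]

lemma roots_map_X_mul_quartic {r s : ℝ} (hs : 0 < s) :
    ((X * ((X - C r) * (X + C r) * (X ^ 2 + C s))).map Complex.ofRealHom).roots =
      {0, (r : ℂ), -(r : ℂ), √s * Complex.I, -(√s * Complex.I)} := by
  have hsqrt : ((√s : ℝ) : ℂ) ^ 2 = s := by rw [← Complex.ofReal_pow, Real.sq_sqrt hs.le]
  rw [← roots_multiset_prod_X_sub_C ({0, (r : ℂ), -(r : ℂ), √s * Complex.I, -(√s * Complex.I)})]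
  congr 1
  simp only [Multiset.insert_eq_cons, Multiset.map_cons, Multiset.map_singleton,
    Multiset.prod_cons, Multiset.prod_singleton, Polynomial.map_mul, Polynomial.map_sub,
    Polynomial.map_add, Polynomial.map_pow, map_X, map_C, C_0, C_neg, C_mul, sub_zero,
    sub_neg_eq_add, Complex.ofRealHom_eq_coe]
  have hI : (X ^ 2 + C (s : ℂ) : ℂ[X]) =
      (X - C (√s : ℂ) * C Complex.I) * (X + C (√s : ℂ) * C Complex.I) := by
    have hCI : (C Complex.I) ^ 2 = -1 := by rw [← C_pow, Complex.I_sq, C_neg, C_1]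
    rw [← hsqrt, C_pow]
    linear_combination (C ((√s : ℝ) : ℂ)) ^ 2 * hCI
  rw [hI]
  ring

/-- Every 5×5 real matrix
`B = [[0,1,0,0,0],[a,0,1,0,0],[0,b,0,-1,0],[0,0,c,0,-1],[0,0,0,d,0]]` with
`a,b,c,d > 0` has characteristic polynomial
`x (x^4 - (a+b-c-d) x^2 - (ac+ad+bd))`, hence exactly three real eigenvalues
(`0`, one positive, one negative) and two nonreal eigenvalues. -/
theorem stmt_9 (a b c d : ℝ) (ha : 0 < a) (hb : 0 < b) (hc : 0 < c) (hd : 0 < d) :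
    let B : Matrix (Fin 5) (Fin 5) ℝ :=
      !![(0:ℝ), 1, 0, 0, 0; a, 0, 1, 0, 0; 0, b, 0, -1, 0;
         0, 0, c, 0, -1; 0, 0, 0, d, 0]
    B.charpoly = X * (X ^ 4 - C (a + b - c - d) * X ^ 2 - C (a * c + a * d + b * d)) ∧
    B.charpoly.IsRoot 0 ∧
    (∃! x : ℝ, 0 < x ∧ B.charpoly.IsRoot x) ∧
    (∃! x : ℝ, x < 0 ∧ B.charpoly.IsRoot x) ∧
    Multiset.card B.charpoly.roots = 3 ∧
    Multiset.card ((B.map Complex.ofReal).charpoly.roots.filter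
      (fun z => z.im ≠ 0)) = 2 := by
  intro B
  obtain ⟨r, s, hr, hs, hfactor⟩ :=
    exists_quartic_factor (p := a + b - c - d) (q := a * c + a * d + b * d) (by positivity)
  have hB : B.charpoly = X * ((X - C r) * (X + C r) * (X ^ 2 + C s)) := by
    rw [charpoly_tridiag_five, hfactor]
  have hroots : B.charpoly.roots = {0, r, -r} := by rw [hB, roots_X_mul_quartic hs]
  have hroot : ∀ x, B.charpoly.IsRoot x ↔ x = 0 ∨ x = r ∨ x = -r := fun x => by
    rw [← mem_roots (charpoly_monic B).ne_zero, hroots]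
    simp
  have hrootsℂ : (B.map Complex.ofReal).charpoly.roots =
      {0, (r : ℂ), -(r : ℂ), √s * Complex.I, -(√s * Complex.I)} := by
    rw [← roots_map_X_mul_quartic hs, ← hB, ← charpoly_map]
    rfl
  refine ⟨charpoly_tridiag_five a b c d, (hroot 0).2 (Or.inl rfl),
    ⟨r, ⟨hr, (hroot r).2 (by simp)⟩, ?_⟩, ⟨-r, ⟨by linarith, (hroot (-r)).2 (by simp)⟩, ?_⟩,
    by simp [hroots], ?_⟩
  · rintro x ⟨hx, hxroot⟩
    rcases (hroot x).1 hxroot with rfl | rfl | rfl <;> linarith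
  · rintro x ⟨hx, hxroot⟩
    rcases (hroot x).1 hxroot with rfl | rfl | rfl <;> linarith
  · simp [hrootsℂ, Multiset.filter_singleton, (Real.sqrt_pos.mpr hs).ne']
end

section
/- The 6×6 sign pattern with zero diagonal, superdiagonal signs (+,+,-,+,+), and subdiagonal all +, is not consistent: there exist two matrices in its qualitative class with different numbers of real eigenvalues. Specifically, the matrix B1 with all subdiagonal entries 1 and superdiagonal entries (1,1,-1,1,1) has 0 real eigenvalues, while the matrix B2 equal to B1 except with subdiagonal entry b_{65} = 2 has 4 real eigenvalues. -/
/-!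
`B1` and `B2` are the members `t = 1` and `t = 2` of the family with `(6,5)` entry `t`, whose
members with `t > 0` all have the same sign pattern. Expanding the tridiagonal determinant gives the
characteristic polynomial `X⁶ - (2 + t) X⁴ + (1 + t) X² + t`. For `t = 1` it equals
`(X³ - 2X)² + (X² - 1)²`, whose two squares never vanish together, so there is no real root.
For `t = 2` it factors in `y = X²` as `(y - 2)(y - 1 - √2)(y - 1 + √2)`: the two positive roots
in `y` give the four real roots `±√2`, `±√(1 + √2)`, the negative one gives none.
-/

open Polynomial Matrix

theorem Polynomial.roots_eq_zero_of_forall_eval_ne_zero {R : Type*} [CommRing R] [IsDomain R]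
    {p : R[X]} (h : ∀ x, p.eval x ≠ 0) : p.roots = 0 :=
  Multiset.eq_zero_of_forall_notMem fun x hx => h x (isRoot_of_mem_roots hx)

theorem Polynomial.nthRoots_two_sq {R : Type*} [CommRing R] [IsDomain R] (s : R) :
    nthRoots 2 (s ^ 2) = {s, -s} := by
  have hfac : (X ^ 2 - C (s ^ 2) : R[X]) = (X - C s) * (X - C (-s)) := by
    rw [map_neg, map_pow]; ring
  rw [nthRoots, hfac, roots_mul ((monic_X_sub_C s).mul (monic_X_sub_C _)).ne_zero,
    roots_X_sub_C, roots_X_sub_C]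
  rfl

theorem Polynomial.nthRoots_two_of_neg {R : Type*} [CommRing R] [IsDomain R] [LinearOrder R]
    [IsOrderedRing R] {a : R} (ha : a < 0) : nthRoots 2 a = 0 :=
  nthRoots_two_eq_zero_iff.2 fun hsq => ha.not_ge hsq.nonneg

theorem Real.card_nthRoots_two_of_nonneg {a : ℝ} (ha : 0 ≤ a) :
    Multiset.card (nthRoots 2 a) = 2 := by
  rw [← Real.sq_sqrt ha, nthRoots_two_sq]
  rfl

def signPatternMatrix (t : ℝ) : Matrix (Fin 6) (Fin 6) ℝ :=
  !![0, 1, 0, 0, 0, 0; 1, 0, 1, 0, 0, 0; 0, 1, 0, -1, 0, 0;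
     0, 0, 1, 0, 1, 0; 0, 0, 0, 1, 0, 1; 0, 0, 0, 0, t, 0]

theorem sign_signPatternMatrix {s t : ℝ} (hs : 0 < s) (ht : 0 < t) (i j : Fin 6) :
    Real.sign (signPatternMatrix s i j) = Real.sign (signPatternMatrix t i j) := by
  fin_cases i <;> fin_cases j <;> simp [signPatternMatrix, Real.sign_of_pos hs, Real.sign_of_pos ht]

theorem charpoly_signPatternMatrix (t : ℝ) : (signPatternMatrix t).charpoly
    = X ^ 6 - (2 + C t) * X ^ 4 + (1 + C t) * X ^ 2 + C t := by
  simp only [charpoly, det_succ_row_zero, det_unique, Fin.sum_univ_succ, Finset.univ_unique,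
    Finset.sum_singleton, submatrix, Fin.succAbove, charmatrix_apply, signPatternMatrix, of_apply,
    cons_val', cons_val_fin_one, cons_val_zero, cons_val_succ, cons_val_one, cons_val,
    Fin.reduceSucc, Fin.reduceCastSucc, Fin.reduceLT, Fin.succ_zero_eq_one, Fin.succ_one_eq_two,
    Fin.castSucc_zero, Fin.castSucc_one, Fin.default_eq_zero, Fin.isValue, diagonal_apply_eq,
    diagonal_apply_ne, ne_eq, Fin.reduceEq, not_false_eq_true, if_true, if_false, Fin.lt_one_iff,
    lt_self_iff_false, Fin.succ_pos, not_lt_zero, Fin.val_succ, Fin.val_zero, map_zero, map_one,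
    map_neg]
  ring

theorem roots_charpoly_signPatternMatrix_one : (signPatternMatrix 1).charpoly.roots = 0 := by
  refine roots_eq_zero_of_forall_eval_ne_zero fun x => ?_
  simp only [charpoly_signPatternMatrix, map_one, eval_add, eval_sub, eval_mul, eval_pow, eval_X,
    eval_one, eval_ofNat]
  nlinarith [sq_nonneg (x ^ 3 - 2 * x), sq_nonneg (x ^ 2 - 1)]

theorem charpoly_signPatternMatrix_two : (signPatternMatrix 2).charpoly
    = (X ^ 2 - C 2) * (X ^ 2 - C (1 + √2)) * (X ^ 2 - C (1 - √2)) := by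
  have hsum : C (1 + √2) + C (1 - √2) = (2 : ℝ[X]) := by
    rw [← map_add, add_add_sub_cancel, one_add_one_eq_two, map_ofNat]
  have hprod : C (1 + √2) * C (1 - √2) = (-1 : ℝ[X]) := by
    rw [← map_mul, ← sq_sub_sq, one_pow, Real.sq_sqrt zero_le_two]; norm_num
  rw [charpoly_signPatternMatrix, map_ofNat]
  linear_combination (X ^ 2 - 2 : ℝ[X]) * (X ^ 2 * hsum - hprod)

theorem card_roots_charpoly_signPatternMatrix_two :
    Multiset.card (signPatternMatrix 2).charpoly.roots = 4 := by
  have hmonic (a : ℝ) : (X ^ 2 - C a).Monic := monic_X_pow_sub_C a two_ne_zero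
  rw [charpoly_signPatternMatrix_two,
    roots_mul (((hmonic _).mul (hmonic _)).mul (hmonic _)).ne_zero,
    roots_mul ((hmonic _).mul (hmonic _)).ne_zero]
  change Multiset.card (nthRoots 2 2 + nthRoots 2 (1 + √2) + nthRoots 2 (1 - √2)) = 4
  rw [nthRoots_two_of_neg (sub_neg.2 Real.one_lt_sqrt_two), Multiset.card_add, Multiset.card_add,
    Real.card_nthRoots_two_of_nonneg zero_le_two, Real.card_nthRoots_two_of_nonneg (by positivity)]
  rfl

/-- The 6×6 sign pattern with zero diagonal, superdiagonal signs `(+,+,-,+,+)`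
and subdiagonal all `+` is not consistent: the matrices `B1` and `B2` below have
the same entrywise sign pattern, but `B1` has 0 real eigenvalues while `B2` has
4 real eigenvalues (counted with multiplicity). -/
theorem stmt_10 :
    let B1 : Matrix (Fin 6) (Fin 6) ℝ :=
      !![(0:ℝ), 1, 0, 0, 0, 0; 1, 0, 1, 0, 0, 0; 0, 1, 0, -1, 0, 0;
         0, 0, 1, 0, 1, 0; 0, 0, 0, 1, 0, 1; 0, 0, 0, 0, 1, 0]
    let B2 : Matrix (Fin 6) (Fin 6) ℝ :=
      !![(0:ℝ), 1, 0, 0, 0, 0; 1, 0, 1, 0, 0, 0; 0, 1, 0, -1, 0, 0;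
         0, 0, 1, 0, 1, 0; 0, 0, 0, 1, 0, 1; 0, 0, 0, 0, 2, 0]
    (∀ i j, Real.sign (B1 i j) = Real.sign (B2 i j)) ∧
    Multiset.card B1.charpoly.roots = 0 ∧
    Multiset.card B2.charpoly.roots = 4 := by
  intro B1 B2
  refine ⟨sign_signPatternMatrix one_pos two_pos, ?_, card_roots_charpoly_signPatternMatrix_two⟩
  rw [show B1 = signPatternMatrix 1 from rfl, roots_charpoly_signPatternMatrix_one]
  rfl
end

section
/- Let B be an n×n real matrix with n odd that is combinatorially the adjacency structure of a single n-cycle in which every undirected edge is negative: B_{i,i+1}·B_{i+1,i} < 0 for all i (indices mod n), B_{ii} = 0, and all other entries 0. Then B has exactly one real eigenvalue. -/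
/-!
The characteristic polynomial `χ` of `B` is strictly increasing on `ℝ`. Indeed `χ'(x)` is the sum
of the principal `(n-1)`-minors of `x • 1 - B`, i.e. the trace of its adjugate. Deleting a vertex
of the cycle leaves a path, so each of these minors is the determinant of `x • 1 - A` for a
tridiagonal `A` with zero diagonal and negative edge products `A p (p+1) * A (p+1) p`. Expanding
along the last row gives the three-term recurrence `Dₖ = x Dₖ₋₁ + cₖ Dₖ₋₂` with `cₖ > 0`, from
which `Dₖ > 0` for even `k` and `x Dₖ ≥ 0` for odd `k`; as `n - 1` is even, `χ' > 0`. A real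
polynomial of odd degree has a root, and by Rolle it has at most one more root (with
multiplicity) than its derivative, which has none.
-/

open Polynomial Matrix Filter

namespace Polynomial

theorem tendsto_atBot_of_odd_natDegree_of_leadingCoeff_pos {p : ℝ[X]} (hodd : Odd p.natDegree)
    (hlc : 0 < p.leadingCoeff) : Tendsto (fun x => eval x p) atBot atBot := by
  refine p.isEquivalent_atBot_lead.symm.tendsto_atBot ?_
  have hpow : Tendsto (fun y : ℝ => p.leadingCoeff * y ^ p.natDegree) atTop atTop :=
    (tendsto_pow_atTop hodd.pos.ne').const_mul_atTop hlc
  refine ((tendsto_neg_atTop_atBot.comp hpow).comp tendsto_neg_atBot_atTop).congr fun x => ?_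
  simp [hodd.neg_pow]

theorem exists_isRoot_of_odd_natDegree {p : ℝ[X]} (hodd : Odd p.natDegree) : ∃ x, p.IsRoot x := by
  wlog hlc : 0 < p.leadingCoeff generalizing p
  · obtain ⟨x, hx⟩ := this (p := -p) (by rwa [natDegree_neg]) <| by
      rw [leadingCoeff_neg, neg_pos]
      exact (not_lt.mp hlc).lt_of_ne (leadingCoeff_ne_zero.mpr (ne_zero_of_natDegree_gt hodd.pos))
    exact ⟨x, by simpa using hx⟩
  obtain ⟨x, hx⟩ := p.continuous.surjective
    (p.tendsto_atTop_of_leadingCoeff_nonneg (natDegree_pos_iff_degree_pos.mp hodd.pos) hlc.le)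
    (tendsto_atBot_of_odd_natDegree_of_leadingCoeff_pos hodd hlc) 0
  exact ⟨x, hx⟩

theorem card_roots_eq_one_of_odd_natDegree {p : ℝ[X]} (hodd : Odd p.natDegree)
    (hderiv : ∀ x, 0 < eval x (derivative p)) : Multiset.card p.roots = 1 := by
  have hp : p ≠ 0 := ne_zero_of_natDegree_gt hodd.pos
  have hderiv_roots : (derivative p).roots = 0 :=
    Multiset.eq_zero_of_forall_notMem fun x hx => (hderiv x).ne' (isRoot_of_mem_roots hx)
  obtain ⟨r, hr⟩ := exists_isRoot_of_odd_natDegree hodd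
  refine le_antisymm ?_ (Multiset.card_pos_iff_exists_mem.mpr ⟨r, (mem_roots hp).mpr hr⟩)
  simpa [hderiv_roots] using card_roots_le_derivative p

end Polynomial

namespace Matrix

section Jacobi

variable {n R : Type*} [Fintype n] [DecidableEq n] [CommRing R]

theorem derivative_det (A : Matrix n n R[X]) :
    derivative A.det = ∑ i, (A.updateCol i fun k => derivative (A k i)).det := by
  simp only [det_apply', map_sum, derivative_intCast_mul, derivative_prod_finset, Finset.mul_sum]
  rw [Finset.sum_comm]
  refine Finset.sum_congr rfl fun i _ => Finset.sum_congr rfl fun σ _ => ?_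
  rw [← Finset.mul_prod_erase _ _ (Finset.mem_univ i), updateCol_self, mul_comm (derivative _)]
  congr 2
  exact Finset.prod_congr rfl fun j hj => by rw [updateCol_ne (Finset.ne_of_mem_erase hj)]

theorem derivative_charpoly (M : Matrix n n R) :
    derivative M.charpoly = trace (adjugate (charmatrix M)) := by
  have hcol : ∀ i, (fun k => derivative (charmatrix M k i)) = Pi.single i 1 := by
    intro i
    ext k
    rcases eq_or_ne k i with rfl | hki <;> simp [*]
  rw [charpoly, derivative_det, ← trace_transpose, adjugate_transpose, trace]
  refine Finset.sum_congr rfl fun i _ => ?_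
  rw [hcol, diag_apply, adjugate_apply, updateRow_transpose, det_transpose]

theorem eval_derivative_charpoly (M : Matrix n n R) (x : R) :
    eval x (derivative M.charpoly) = trace (adjugate (scalar n x - M)) := by
  have hmap : (evalRingHom x).mapMatrix (charmatrix M) = scalar n x - M := by
    ext i j
    rcases eq_or_ne i j with rfl | hij <;> simp [*]
  rw [derivative_charpoly, ← hmap, ← RingHom.map_adjugate, trace, trace, eval_finsetSum]
  rfl

end Jacobi

variable {R : Type*} [CommRing R] {k m : ℕ}

theorem adjugate_apply_self_eq_det_submatrix_castSucc_add
    (N : Matrix (Fin (m + 1)) (Fin (m + 1)) R) (i : Fin (m + 1)) :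
    adjugate N i i =
      (N.submatrix (fun q : Fin m => q.castSucc + (i + 1)) fun q => q.castSucc + (i + 1)).det := by
  let σ : Fin (m + 1) ≃ Fin (m + 1) := Equiv.addRight (i + 1)
  have hσ : σ (Fin.last m) = i := by
    show Fin.last m + (i + 1) = i
    rw [add_comm i 1, ← add_assoc, Fin.last_add_one, zero_add]
  conv_lhs => rw [← hσ]
  rw [← submatrix_apply (adjugate N) σ σ, ← adjugate_submatrix_equiv_self,
    adjugate_fin_succ_eq_det_submatrix, Fin.succAbove_last, submatrix_submatrix]
  simp [σ, Function.comp_def, add_assoc]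

theorem submatrix_scalar_sub {ι κ : Type*} [Fintype ι] [Fintype κ] [DecidableEq ι] [DecidableEq κ]
    (x : R) (A : Matrix ι ι R) {f : κ → ι} (hf : Function.Injective f) :
    (scalar ι x - A).submatrix f f = scalar κ x - A.submatrix f f := by
  ext i j
  rcases eq_or_ne i j with rfl | hij <;> simp [*, hf.ne]

theorem det_eq_mul_det_submatrix_castSucc_of_col_eq_zero
    (M : Matrix (Fin (k + 1)) (Fin (k + 1)) R) (h : ∀ i : Fin k, M i.castSucc (Fin.last k) = 0) :
    M.det = M (Fin.last k) (Fin.last k) * (M.submatrix Fin.castSucc Fin.castSucc).det := by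
  rw [det_succ_column M (Fin.last k), Fin.sum_univ_castSucc]
  simp [h, Fin.succAbove_last]

def IsTridiagonal (T : Matrix (Fin m) (Fin m) R) : Prop :=
  ∀ p q : Fin m, (p : ℕ) + 1 < q ∨ (q : ℕ) + 1 < p → T p q = 0

theorem IsTridiagonal.submatrix_castSucc {T : Matrix (Fin (m + 1)) (Fin (m + 1)) R}
    (hT : T.IsTridiagonal) : (T.submatrix Fin.castSucc Fin.castSucc).IsTridiagonal :=
  fun p q h => hT _ _ (by simpa using h)

theorem IsTridiagonal.scalar_sub {A : Matrix (Fin m) (Fin m) R} (hA : A.IsTridiagonal) (x : R) :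
    (scalar (Fin m) x - A).IsTridiagonal := fun p q h => by
  have hpq : p ≠ q := by rintro rfl; omega
  simp [hA p q h, hpq]

theorem IsTridiagonal.det_succ_succ {T : Matrix (Fin (k + 2)) (Fin (k + 2)) R}
    (hT : T.IsTridiagonal) :
    T.det = T (Fin.last _) (Fin.last _) * (T.submatrix Fin.castSucc Fin.castSucc).det -
      T (Fin.last _) (Fin.last k).castSucc * T (Fin.last k).castSucc (Fin.last _) *
        ((T.submatrix Fin.castSucc Fin.castSucc).submatrix Fin.castSucc Fin.castSucc).det := by
  have hminor := det_eq_mul_det_submatrix_castSucc_of_col_eq_zero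
    (T.submatrix Fin.castSucc (Fin.last k).castSucc.succAbove) fun i => hT _ _ (.inl (by simp))
  have hcol : (Fin.last k).castSucc.succAbove ∘ Fin.castSucc = Fin.castSucc ∘ Fin.castSucc :=
    funext fun j => Fin.succAbove_of_castSucc_lt _ _ (by simp [Fin.castSucc_lt_last])
  rw [det_succ_row T (Fin.last _), Fin.sum_univ_castSucc, Fin.sum_univ_castSucc,
    Finset.sum_eq_zero fun j _ => by rw [hT _ _ (.inr (by simp)), mul_zero, zero_mul],
    Fin.succAbove_last, hminor]
  simp [hcol]
  ring

end Matrix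

section Ordered

variable {R : Type*} [CommRing R] [LinearOrder R]

structure IsNegativePath {m : ℕ} (A : Matrix (Fin m) (Fin m) R) : Prop where
  diag : ∀ p, A p p = 0
  isTridiagonal : A.IsTridiagonal
  neg : ∀ p q : Fin m, (q : ℕ) = p + 1 → A p q * A q p < 0

namespace IsNegativePath

variable {m : ℕ}

theorem submatrix_castSucc {A : Matrix (Fin (m + 1)) (Fin (m + 1)) R} (hA : IsNegativePath A) :
    IsNegativePath (A.submatrix Fin.castSucc Fin.castSucc) where
  diag _ := hA.diag _
  isTridiagonal := hA.isTridiagonal.submatrix_castSucc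
  neg _ _ h := hA.neg _ _ h

theorem det_scalar_sub_sign [IsStrictOrderedRing R] {A : Matrix (Fin m) (Fin m) R}
    (hA : IsNegativePath A) (x : R) :
    (Even m → 0 < (scalar _ x - A).det) ∧ (Odd m → 0 ≤ x * (scalar _ x - A).det) := by
  induction m using Nat.twoStepInduction with
  | zero => simp
  | one => simp [det_unique, hA.diag, mul_self_nonneg]
  | more k ih₂ ih₁ =>
    have hA' := hA.submatrix_castSucc
    obtain ⟨ihe₁, iho₁⟩ := ih₁ hA'
    obtain ⟨ihe₂, iho₂⟩ := ih₂ hA'.submatrix_castSucc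
    simp only [← submatrix_scalar_sub x _ (Fin.castSucc_injective _)] at ihe₁ iho₁ ihe₂ iho₂
    have hne : (Fin.last k).castSucc ≠ Fin.last (k + 1) := (Fin.castSucc_lt_last _).ne
    have hdiag : (scalar (Fin (k + 2)) x - A) (Fin.last (k + 1)) (Fin.last (k + 1)) = x := by
      simp [hA.diag]
    have hedge : (scalar (Fin (k + 2)) x - A) (Fin.last (k + 1)) (Fin.last k).castSucc *
        (scalar (Fin (k + 2)) x - A) (Fin.last k).castSucc (Fin.last (k + 1)) < 0 := by
      simpa [hne, hne.symm, mul_comm] using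
        hA.neg (Fin.last k).castSucc (Fin.last (k + 1)) (by simp)
    rw [(hA.isTridiagonal.scalar_sub x).det_succ_succ, hdiag]
    constructor
    · intro he
      have hk : Even k := by simpa [Nat.even_add] using he
      nlinarith [iho₁ hk.add_one, ihe₂ hk]
    · intro ho
      have hk : Odd k := by simpa [Nat.odd_add] using ho
      nlinarith [ihe₁ hk.add_one, iho₂ hk, mul_self_nonneg x]

end IsNegativePath

structure IsNegativeCycle {m : ℕ} (B : Matrix (Fin (m + 1)) (Fin (m + 1)) R) : Prop where
  diag : ∀ i, B i i = 0
  supp : ∀ i j, j ≠ i + 1 → i ≠ j + 1 → B i j = 0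
  neg : ∀ i, B i (i + 1) * B (i + 1) i < 0

namespace IsNegativeCycle

variable {m : ℕ} {B : Matrix (Fin (m + 1)) (Fin (m + 1)) R}

/-- `q ↦ q.castSucc + k` lists the vertices other than `k - 1` in cyclic order, so deleting
`k - 1` from the cycle leaves the path `0 — 1 — ⋯ — (m - 1)`. -/
theorem isNegativePath_submatrix_castSucc_add (hB : IsNegativeCycle B) (k : Fin (m + 1)) :
    IsNegativePath (B.submatrix (fun q : Fin m => q.castSucc + k) fun q => q.castSucc + k) := by
  have hstep : ∀ p q : Fin m, q.castSucc + k = p.castSucc + k + 1 ↔ (q : ℕ) = p + 1 := by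
    intro p q
    rw [add_right_comm, add_left_inj, Fin.coeSucc_eq_succ, Fin.ext_iff]
    simp
  refine ⟨fun p => hB.diag _, fun p q h => hB.supp _ _ ?_ ?_, fun p q h => ?_⟩
  · rw [Ne, hstep]; omega
  · rw [Ne, hstep]; omega
  · simpa only [submatrix_apply, (hstep p q).mpr h] using hB.neg (p.castSucc + k)

theorem eval_derivative_charpoly_pos [IsStrictOrderedRing R] (hB : IsNegativeCycle B)
    (hm : Even m) (x : R) :
    0 < eval x (derivative B.charpoly) := by
  rw [eval_derivative_charpoly, trace]
  refine Finset.sum_pos (fun i _ => ?_) Finset.univ_nonempty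
  rw [diag_apply, adjugate_apply_self_eq_det_submatrix_castSucc_add,
    submatrix_scalar_sub _ _ fun _ _ h => Fin.castSucc_injective _ (add_right_cancel h)]
  exact ((hB.isNegativePath_submatrix_castSucc_add _).det_scalar_sub_sign x).1 hm

end IsNegativeCycle

end Ordered

theorem Fin.val_eq_val_add_one_mod_iff {m : ℕ} (u v : Fin (m + 1)) :
    (v : ℕ) = ((u : ℕ) + 1) % (m + 1) ↔ v = u + 1 := by
  rw [Fin.ext_iff, Fin.val_add, Fin.val_one', Nat.add_mod_mod]

theorem stmt_11_general (n : ℕ) (hodd : Odd n)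
    (B : Matrix (Fin n) (Fin n) ℝ)
    (hdiag : ∀ i, B i i = 0)
    (hsupp : ∀ i j : Fin n, (j : ℕ) ≠ ((i : ℕ) + 1) % n →
      (i : ℕ) ≠ ((j : ℕ) + 1) % n → B i j = 0)
    (hneg : ∀ i j : Fin n, (j : ℕ) = ((i : ℕ) + 1) % n → B i j * B j i < 0) :
    Multiset.card B.charpoly.roots = 1 := by
  obtain ⟨m, rfl⟩ : ∃ m, n = m + 1 := ⟨n - 1, (Nat.succ_pred_eq_of_pos hodd.pos).symm⟩
  have hB : IsNegativeCycle B :=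
    { diag := hdiag
      supp := fun i j hij hji => hsupp i j (mt (Fin.val_eq_val_add_one_mod_iff i j).mp hij)
        (mt (Fin.val_eq_val_add_one_mod_iff j i).mp hji)
      neg := fun i => hneg i (i + 1) ((Fin.val_eq_val_add_one_mod_iff i _).mpr rfl) }
  refine card_roots_eq_one_of_odd_natDegree ?_ (hB.eval_derivative_charpoly_pos ?_)
  · rwa [charpoly_natDegree_eq_dim, Fintype.card_fin]
  · rwa [Nat.odd_add_one, Nat.not_odd_iff_even] at hodd

/-- Let `B` be an `n×n` real matrix (`n` odd, `n ≥ 3`) supported on a single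
`n`-cycle (in both directions) with zero diagonal, in which every undirected
edge is negative: `B i (i+1) * B (i+1) i < 0` for all `i` (indices mod `n`).
Then `B` has exactly one real eigenvalue. -/
theorem stmt_11 (n : ℕ) (hodd : Odd n) (hn : 3 ≤ n)
    (B : Matrix (Fin n) (Fin n) ℝ)
    (hdiag : ∀ i, B i i = 0)
    (hsupp : ∀ i j : Fin n, (j : ℕ) ≠ ((i : ℕ) + 1) % n →
      (i : ℕ) ≠ ((j : ℕ) + 1) % n → B i j = 0)
    (hneg : ∀ i j : Fin n, (j : ℕ) = ((i : ℕ) + 1) % n → B i j * B j i < 0) :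
    Multiset.card B.charpoly.roots = 1 :=
  stmt_11_general n hodd B hdiag hsupp hneg
end

section
/- The two matrices B1 = [[0,-10,0,-1],[1,0,-10,0],[0,1,0,10],[10,0,-1,0]] and B2 = [[0,-10,0,-1],[10,0,-1,0],[0,1,0,10],[1,0,-10,0]] have the same sign pattern entrywise, but B1 has exactly 2 real eigenvalues while B2 has 0 real eigenvalues. -/
open Polynomial Matrix

/-!
Expanding the determinants gives `χ(B1) = (X - 9)(X + 9)(X² + 121)` and
`χ(B2) = (X² + 81)(X² + 121)`; a factor `X² + c` with `c > 0` has no real roots.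
-/

namespace Polynomial

variable {K : Type*} [Field K] [LinearOrder K] [IsStrictOrderedRing K] {c : K}

theorem roots_X_sq_add_C_of_pos (hc : 0 < c) : (X ^ 2 + C c).roots = 0 :=
  Multiset.eq_zero_of_forall_notMem fun a ha => by
    have hroot := (mem_roots'.1 ha).2
    simp only [IsRoot, eval_add, eval_pow, eval_X, eval_C] at hroot
    nlinarith [sq_nonneg a]

theorem roots_mul_X_sq_add_C_of_pos {p : K[X]} (hp : p ≠ 0) (hc : 0 < c) :
    (p * (X ^ 2 + C c)).roots = p.roots := by
  rw [roots_mul (mul_ne_zero hp (monic_X_pow_add_C c two_ne_zero).ne_zero),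
    roots_X_sq_add_C_of_pos hc, add_zero]

end Polynomial

theorem charpoly_B1 :
    (!![(0:ℝ), -10, 0, -1; 1, 0, -10, 0; 0, 1, 0, 10; 10, 0, -1, 0]).charpoly =
      (X - C 9) * (X + C 9) * (X ^ 2 + C 121) := by
  rw [charpoly, det_succ_row_zero]
  simp [Fin.sum_univ_succ, det_fin_three, charmatrix_apply, Fin.succAbove, submatrix_apply,
    map_ofNat]
  ring

theorem charpoly_B2 :
    (!![(0:ℝ), -10, 0, -1; 10, 0, -1, 0; 0, 1, 0, 10; 1, 0, -10, 0]).charpoly =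
      (X ^ 2 + C 81) * (X ^ 2 + C 121) := by
  rw [charpoly, det_succ_row_zero]
  simp [Fin.sum_univ_succ, det_fin_three, charmatrix_apply, Fin.succAbove, submatrix_apply,
    map_ofNat]
  ring

/-- The matrices `B1` and `B2` below have the same entrywise sign pattern, but
`B1` has exactly 2 real eigenvalues while `B2` has 0 real eigenvalues
(counted with multiplicity). -/
theorem stmt_14 :
    let B1 : Matrix (Fin 4) (Fin 4) ℝ :=
      !![(0:ℝ), -10, 0, -1; 1, 0, -10, 0; 0, 1, 0, 10; 10, 0, -1, 0]
    let B2 : Matrix (Fin 4) (Fin 4) ℝ :=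
      !![(0:ℝ), -10, 0, -1; 10, 0, -1, 0; 0, 1, 0, 10; 1, 0, -10, 0]
    (∀ i j, Real.sign (B1 i j) = Real.sign (B2 i j)) ∧
    Multiset.card B1.charpoly.roots = 2 ∧
    Multiset.card B2.charpoly.roots = 0 := by
  refine ⟨fun i j => ?_, ?_, ?_⟩
  · fin_cases i <;> fin_cases j <;> norm_num [Real.sign]
  · have hlin : (X - C (9 : ℝ)) * (X + C 9) ≠ 0 :=
      ((monic_X_sub_C 9).mul (monic_X_add_C 9)).ne_zero
    rw [charpoly_B1, roots_mul_X_sq_add_C_of_pos hlin (by norm_num), roots_mul hlin,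
      roots_X_sub_C, roots_X_add_C]
    rfl
  · rw [charpoly_B2, roots_mul_X_sq_add_C_of_pos (monic_X_pow_add_C _ two_ne_zero).ne_zero
      (by norm_num), roots_X_sq_add_C_of_pos (by norm_num)]
    rfl
end
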